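/- A Q-function Q equals Q* if and only if Q satisfies the Greedy Multi-Step Bellman Equation Q = G Q, where G Q = max_{π∈Π̂} max_{1≤n≤N} (B^π)^{n-1} B Q. -/
import Mathlib


open Finset Filter Topology

/-- A transition kernel: for each state-action pair, a probability distribution over states. -/
def IsKernel {S A : Type*} [Fintype S] (P : S × A → S → ℝ) : Prop :=
  ∀ p, (∀ s', 0 ≤ P p s') ∧ ∑ s', P p s' = 1

/-- A (stochastic) policy: for each state, a probability distribution over actions. -/
def IsPolicy {S A : Type*} [Fintype A] (π : S → A → ℝ) : Prop :=
  ∀ s, (∀ a, 0 ≤ π s a) ∧ ∑ a, π s a = 1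

/-- Bellman optimality operator: (B Q)(s,a) = r(s,a) + γ ∑_{s'} P(s'|s,a) max_{a'} Q(s',a'). -/
noncomputable def bOpt {S A : Type*} [Fintype S] [Fintype A] [Nonempty A]
    (P : S × A → S → ℝ) (r : S × A → ℝ) (γ : ℝ) (Q : S × A → ℝ) : S × A → ℝ :=
  fun p => r p + γ * ∑ s', P p s' * (univ.sup' univ_nonempty fun a' => Q (s', a'))

/-- Bellman expectation operator for policy π:
    (B^π Q)(s,a) = r(s,a) + γ ∑_{s'} P(s'|s,a) ∑_{a'} π(a'|s') Q(s',a'). -/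
noncomputable def bExp {S A : Type*} [Fintype S] [Fintype A]
    (P : S × A → S → ℝ) (r : S × A → ℝ) (γ : ℝ) (π : S → A → ℝ) (Q : S × A → ℝ) :
    S × A → ℝ :=
  fun p => r p + γ * ∑ s', P p s' * ∑ a', π s' a' * Q (s', a')

/-- Greedy Multi-Step Bellman Operator: G Q = max_{π ∈ Π̂} max_{1 ≤ n ≤ N} (B^π)^{n-1} B Q,
    componentwise, over a finite nonempty policy set indexed by ι. -/
noncomputable def gOp {S A : Type*} [Fintype S] [Fintype A] [Nonempty A]
    (P : S × A → S → ℝ) (r : S × A → ℝ) (γ : ℝ)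
    {ι : Type*} [Fintype ι] [Nonempty ι] (pol : ι → S → A → ℝ)
    (N : ℕ) (hN : 1 ≤ N) (Q : S × A → ℝ) : S × A → ℝ :=
  fun p => univ.sup' univ_nonempty fun i =>
    (Icc 1 N).sup' (nonempty_Icc.mpr hN) fun n =>
      ((bExp P r γ (pol i))^[n - 1] (bOpt P r γ Q)) p


section Aux
variable {S A : Type*} [Fintype S] [Fintype A] [Nonempty S] [Nonempty A]

lemma prob_avg_abs_le {X : Type*} [Fintype X] (w u : X → ℝ) (d : ℝ)
    (hw : ∀ x, 0 ≤ w x) (hs : ∑ x, w x = 1) (hu : ∀ x, |u x| ≤ d) :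
    |∑ x, w x * u x| ≤ d := by
  calc |∑ x, w x * u x| ≤ ∑ x, |w x * u x| := Finset.abs_sum_le_sum_abs _ _
    _ = ∑ x, w x * |u x| := Finset.sum_congr rfl (fun x _ => by
        rw [abs_mul, abs_of_nonneg (hw x)])
    _ ≤ ∑ x, w x * d := Finset.sum_le_sum fun x _ =>
        mul_le_mul_of_nonneg_left (hu x) (hw x)
    _ = d := by rw [← Finset.sum_mul, hs, one_mul]

lemma prob_avg_le {X : Type*} [Fintype X] (w u : X → ℝ) (d : ℝ)
    (hw : ∀ x, 0 ≤ w x) (hs : ∑ x, w x = 1) (hu : ∀ x, u x ≤ d) :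
    ∑ x, w x * u x ≤ d := by
  calc ∑ x, w x * u x ≤ ∑ x, w x * d := Finset.sum_le_sum fun x _ =>
        mul_le_mul_of_nonneg_left (hu x) (hw x)
    _ = d := by rw [← Finset.sum_mul, hs, one_mul]

lemma sup'_abs_sub_le {X : Type*} (s : Finset X) (hs : s.Nonempty) (f g : X → ℝ) (d : ℝ)
    (h : ∀ x ∈ s, |f x - g x| ≤ d) :
    |s.sup' hs f - s.sup' hs g| ≤ d := by
  rw [abs_le]
  constructor
  · have : s.sup' hs g ≤ s.sup' hs f + d := by
      apply Finset.sup'_le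
      intro x hx
      have h1 := (abs_le.mp (h x hx)).1
      have h2 := Finset.le_sup' f hx
      linarith
    linarith
  · have : s.sup' hs f ≤ s.sup' hs g + d := by
      apply Finset.sup'_le
      intro x hx
      have h1 := (abs_le.mp (h x hx)).2
      have h2 := Finset.le_sup' g hx
      linarith
    linarith

lemma bOpt_contract (P : S × A → S → ℝ) (r : S × A → ℝ) (γ : ℝ) (hγ0 : 0 ≤ γ)
    (hP : IsKernel P) (Q1 Q2 : S × A → ℝ) (d : ℝ)
    (h : ∀ p, |Q1 p - Q2 p| ≤ d) (p : S × A) :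
    |bOpt P r γ Q1 p - bOpt P r γ Q2 p| ≤ γ * d := by
  have key : bOpt P r γ Q1 p - bOpt P r γ Q2 p
      = γ * ∑ s', P p s' * ((univ.sup' univ_nonempty fun a' => Q1 (s', a'))
          - (univ.sup' univ_nonempty fun a' => Q2 (s', a'))) := by
    simp only [bOpt, mul_sub, Finset.sum_sub_distrib]
    ring
  rw [key, abs_mul, abs_of_nonneg hγ0]
  apply mul_le_mul_of_nonneg_left _ hγ0
  apply prob_avg_abs_le _ _ d (hP p).1 (hP p).2
  intro s'
  exact sup'_abs_sub_le _ _ _ _ d (fun a _ => h (s', a))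

lemma bExp_contract (P : S × A → S → ℝ) (r : S × A → ℝ) (γ : ℝ) (hγ0 : 0 ≤ γ)
    (hP : IsKernel P) (π : S → A → ℝ) (hπ : IsPolicy π) (Q1 Q2 : S × A → ℝ) (d : ℝ)
    (h : ∀ p, |Q1 p - Q2 p| ≤ d) (p : S × A) :
    |bExp P r γ π Q1 p - bExp P r γ π Q2 p| ≤ γ * d := by
  have key : bExp P r γ π Q1 p - bExp P r γ π Q2 p
      = γ * ∑ s', P p s' * ∑ a', π s' a' * (Q1 (s', a') - Q2 (s', a')) := by
    simp only [bExp, mul_sub, Finset.sum_sub_distrib]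
    ring
  rw [key, abs_mul, abs_of_nonneg hγ0]
  apply mul_le_mul_of_nonneg_left _ hγ0
  apply prob_avg_abs_le _ _ d (hP p).1 (hP p).2
  intro s'
  exact prob_avg_abs_le _ _ d (hπ s').1 (hπ s').2 (fun a => h (s', a))

lemma bExp_iter_nonexpansive (P : S × A → S → ℝ) (r : S × A → ℝ) (γ : ℝ)
    (hγ0 : 0 ≤ γ) (hγ1 : γ ≤ 1)
    (hP : IsKernel P) (π : S → A → ℝ) (hπ : IsPolicy π) (k : ℕ) :
    ∀ (Q1 Q2 : S × A → ℝ) (d : ℝ), 0 ≤ d → (∀ p, |Q1 p - Q2 p| ≤ d) →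
      ∀ p, |(bExp P r γ π)^[k] Q1 p - (bExp P r γ π)^[k] Q2 p| ≤ d := by
  induction k with
  | zero => intro Q1 Q2 d _ h p; simpa using h p
  | succ k ih =>
      intro Q1 Q2 d hd h p
      rw [Function.iterate_succ_apply', Function.iterate_succ_apply']
      have := bExp_contract P r γ hγ0 hP π hπ _ _ d (fun q => ih Q1 Q2 d hd h q) p
      refine this.trans ?_
      nlinarith

lemma bExp_mono (P : S × A → S → ℝ) (r : S × A → ℝ) (γ : ℝ) (hγ0 : 0 ≤ γ)
    (hP : IsKernel P) (π : S → A → ℝ) (hπ : IsPolicy π) (Q1 Q2 : S × A → ℝ)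
    (h : ∀ p, Q1 p ≤ Q2 p) (p : S × A) :
    bExp P r γ π Q1 p ≤ bExp P r γ π Q2 p := by
  unfold bExp
  have : ∑ s', P p s' * ∑ a', π s' a' * Q1 (s', a')
      ≤ ∑ s', P p s' * ∑ a', π s' a' * Q2 (s', a') := by
    apply Finset.sum_le_sum
    intro s' _
    apply mul_le_mul_of_nonneg_left _ ((hP p).1 s')
    apply Finset.sum_le_sum
    intro a' _
    exact mul_le_mul_of_nonneg_left (h (s', a')) ((hπ s').1 a')
  nlinarith

lemma bExp_le_bOpt (P : S × A → S → ℝ) (r : S × A → ℝ) (γ : ℝ) (hγ0 : 0 ≤ γ)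
    (hP : IsKernel P) (π : S → A → ℝ) (hπ : IsPolicy π) (Q : S × A → ℝ) (p : S × A) :
    bExp P r γ π Q p ≤ bOpt P r γ Q p := by
  unfold bExp bOpt
  have : ∑ s', P p s' * ∑ a', π s' a' * Q (s', a')
      ≤ ∑ s', P p s' * (univ.sup' univ_nonempty fun a' => Q (s', a')) := by
    apply Finset.sum_le_sum
    intro s' _
    apply mul_le_mul_of_nonneg_left _ ((hP p).1 s')
    apply prob_avg_le _ _ _ (hπ s').1 (hπ s').2
    intro a
    exact Finset.le_sup' (fun a' => Q (s', a')) (Finset.mem_univ a)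
  nlinarith

lemma bExp_iter_le_Qstar (P : S × A → S → ℝ) (r : S × A → ℝ) (γ : ℝ) (hγ0 : 0 ≤ γ)
    (hP : IsKernel P) (π : S → A → ℝ) (hπ : IsPolicy π)
    (Qstar : S × A → ℝ) (hQ : bOpt P r γ Qstar = Qstar) (k : ℕ) (p : S × A) :
    (bExp P r γ π)^[k] Qstar p ≤ Qstar p := by
  induction k generalizing p with
  | zero => simp
  | succ k ih =>
      rw [Function.iterate_succ_apply']
      calc bExp P r γ π ((bExp P r γ π)^[k] Qstar) p
          ≤ bExp P r γ π Qstar p := bExp_mono P r γ hγ0 hP π hπ _ _ ih p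
        _ ≤ bOpt P r γ Qstar p := bExp_le_bOpt P r γ hγ0 hP π hπ _ p
        _ = Qstar p := by rw [hQ]

end Aux

/-- Q = Q* iff Q satisfies the Greedy Multi-Step Bellman Equation Q = G Q. -/
theorem greedy_multistep_equation_iff
    {S A : Type*} [Fintype S] [Fintype A] [Nonempty S] [Nonempty A]
    (P : S × A → S → ℝ) (r : S × A → ℝ) (γ : ℝ) (hγ0 : 0 < γ) (hγ1 : γ < 1)
    (hP : IsKernel P)
    {ι : Type*} [Fintype ι] [Nonempty ι]
    (pol : ι → S → A → ℝ) (hpol : ∀ i, IsPolicy (pol i))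
    (N : ℕ) (hN : 1 ≤ N)
    (Qstar : S × A → ℝ) (hQ : bOpt P r γ Qstar = Qstar)
    (Q : S × A → ℝ) :
    Q = Qstar ↔ gOp P r γ pol N hN Q = Q := by
  have hγ0' : 0 ≤ γ := hγ0.le
  -- G is a pointwise γ-contraction
  have hGcon : ∀ (Q1 Q2 : S × A → ℝ) (d : ℝ), 0 ≤ d → (∀ p, |Q1 p - Q2 p| ≤ d) →
      ∀ p, |gOp P r γ pol N hN Q1 p - gOp P r γ pol N hN Q2 p| ≤ γ * d := by
    intro Q1 Q2 d hd h p
    unfold gOp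
    apply sup'_abs_sub_le
    intro i _
    apply sup'_abs_sub_le
    intro n _
    exact bExp_iter_nonexpansive P r γ hγ0' hγ1.le hP (pol i) (hpol i) (n - 1)
      _ _ (γ * d) (mul_nonneg hγ0' hd)
      (bOpt_contract P r γ hγ0' hP Q1 Q2 d h) p
  -- Qstar is a fixed point of G
  have hGfix : gOp P r γ pol N hN Qstar = Qstar := by
    funext p
    unfold gOp
    apply le_antisymm
    · apply Finset.sup'_le
      intro i _
      apply Finset.sup'_le
      intro n _
      rw [hQ]
      exact bExp_iter_le_Qstar P r γ hγ0' hP (pol i) (hpol i) Qstar hQ (n - 1) p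
    · have h1 : (1 : ℕ) ∈ Finset.Icc 1 N := Finset.mem_Icc.mpr ⟨le_refl _, hN⟩
      have hi : (Classical.arbitrary ι) ∈ (Finset.univ : Finset ι) := Finset.mem_univ _
      refine le_trans ?_ (Finset.le_sup' _ hi)
      refine le_trans ?_ (Finset.le_sup' _ h1)
      simp [hQ]
  constructor
  · rintro rfl
    exact hGfix
  · intro hfix
    set d : ℝ := Finset.univ.sup' Finset.univ_nonempty (fun p : S × A => |Q p - Qstar p|)
      with hdd
    have hbound : ∀ p, |Q p - Qstar p| ≤ d :=
      fun p => Finset.le_sup' (fun p : S × A => |Q p - Qstar p|) (Finset.mem_univ p)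
    have hd0 : 0 ≤ d := le_trans (abs_nonneg _) (hbound (Classical.arbitrary _))
    have hcon : ∀ p, |Q p - Qstar p| ≤ γ * d := by
      intro p
      have := hGcon Q Qstar d hd0 hbound p
      rwa [hfix, hGfix] at this
    have hdle : d ≤ γ * d := by
      rw [hdd]
      exact Finset.sup'_le _ _ fun p _ => hcon p
    have hdzero : d = 0 := by nlinarith
    funext p
    have := hbound p
    rw [hdzero] at this
    have : |Q p - Qstar p| = 0 := le_antisymm this (abs_nonneg _)
    linarith [abs_eq_zero.mp this, sub_eq_zero.mp (abs_eq_zero.mp this)]
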